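/- arXiv:0912.4223 — 3 statements merged into one kernel-verified Lean document; each statement's English description precedes it below -/
import Mathlib

section
/- Let H be a complex Hilbert space and let T, T₁, T₂, … be bounded self-adjoint operators on H such that sup_j ‖T_j‖ < ∞ and T_j x → T x in norm for every x ∈ H (so that T_j → T in the strong resolvent sense). Assume that for each j, E_j ∈ ℝ is an eigenvalue of T_j with eigenvector φ_j ≠ 0, and that the sequence (φ_j) converges weakly to some φ ≠ 0, i.e. ⟨ψ, φ_j⟩ → ⟨ψ, φ⟩ for every ψ ∈ H. Then the limit E := lim_{j→∞} E_j exists and is an eigenvalue of T with T φ = E φ. If moreover E_j = inf σ(T_j) for every j, then E = inf σ(T). -/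
open Filter Topology ContinuousLinearMap
open scoped InnerProductSpace

/-!
The weakly convergent eigenvectors `φ_j` are bounded (uniform boundedness), so pairing them with
the strongly convergent `T_j ψ` gives `E_j ⟪ψ, φ_j⟫ = ⟪T_j ψ, φ_j⟫ → ⟪T ψ, φ⟫ = ⟪ψ, T φ⟫`.
Taking `ψ = φ` yields `E_j → ⟪φ, T φ⟫ / ‖φ‖²`, and then `T φ = E φ` for the limit `E`.

If `E_j = inf σ(T_j)`, then `E_j ≤ T_j` in the Loewner order, i.e. `E_j ‖x‖² ≤ re ⟪T_j x, x⟫`;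
this inequality survives the strong limit, so `E ≤ T`, and since `E` is an eigenvalue of `T` it
is the least point of `σ(T)`.
-/

theorem Complex.exists_eq_ofReal_of_tendsto {ι : Type*} {l : Filter ι} [l.NeBot] {f : ι → ℝ}
    {c : ℂ} (h : Tendsto (fun i => (f i : ℂ)) l (𝓝 c)) :
    ∃ r : ℝ, Tendsto f l (𝓝 r) ∧ c = r := by
  obtain ⟨r, rfl⟩ : c ∈ Set.range ((↑) : ℝ → ℂ) :=
    Complex.isometry_ofReal.isClosedEmbedding.isClosed_range.mem_of_tendsto h
      (.of_forall fun i => ⟨f i, rfl⟩)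
  exact ⟨r, Complex.isometry_ofReal.isEmbedding.tendsto_nhds_iff.mpr h, rfl⟩

section Hilbert

variable {𝕜 E : Type*} [RCLike 𝕜] [NormedAddCommGroup E] [InnerProductSpace 𝕜 E]

theorem exists_norm_le_of_tendsto_inner [CompleteSpace E] {x : ℕ → E} {y : E}
    (hx : ∀ ψ, Tendsto (fun j => ⟪ψ, x j⟫_𝕜) atTop (𝓝 ⟪ψ, y⟫_𝕜)) : ∃ B, ∀ j, ‖x j‖ ≤ B := by
  obtain ⟨B, hB⟩ := banach_steinhaus (g := fun j => innerSL 𝕜 (x j)) fun ψ => by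
    obtain ⟨C, hC⟩ := (hx ψ).norm.bddAbove_range
    exact ⟨C, fun j => (norm_inner_symm _ _).trans_le (hC ⟨j, rfl⟩)⟩
  exact ⟨B, fun j => by simpa [innerSL_apply_norm] using hB j⟩

theorem tendsto_inner_of_tendsto_of_weak {ι : Type*} {l : Filter ι} {u x : ι → E} {v y : E}
    {B : ℝ} (hu : Tendsto u l (𝓝 v)) (hxB : ∀ i, ‖x i‖ ≤ B)
    (hx : ∀ ψ, Tendsto (fun i => ⟪ψ, x i⟫_𝕜) l (𝓝 ⟪ψ, y⟫_𝕜)) :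
    Tendsto (fun i => ⟪u i, x i⟫_𝕜) l (𝓝 ⟪v, y⟫_𝕜) := by
  have hsmall : Tendsto (fun i => ⟪u i - v, x i⟫_𝕜) l (𝓝 0) := by
    refine squeeze_zero_norm (fun i => (norm_inner_le_norm _ _).trans
      (mul_le_mul_of_nonneg_left (hxB i) (norm_nonneg _))) ?_
    simpa using (tendsto_iff_norm_sub_tendsto_zero.mp hu).mul_const B
  simpa [inner_sub_left] using hsmall.add (hx v)

theorem exists_tendsto_eigenvalue_of_weak [CompleteSpace E] {T : E →L[𝕜] E}
    {Tseq : ℕ → E →L[𝕜] E} (hT : IsSelfAdjoint T) (hTseq : ∀ j, IsSelfAdjoint (Tseq j))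
    (hstrong : ∀ x, Tendsto (fun j => Tseq j x) atTop (𝓝 (T x)))
    {μ : ℕ → 𝕜} {x : ℕ → E} (heig : ∀ j, Tseq j (x j) = μ j • x j) {y : E} (hy : y ≠ 0)
    (hweak : ∀ ψ, Tendsto (fun j => ⟪ψ, x j⟫_𝕜) atTop (𝓝 ⟪ψ, y⟫_𝕜)) :
    ∃ c, Tendsto μ atTop (𝓝 c) ∧ T y = c • y := by
  obtain ⟨B, hB⟩ := exists_norm_le_of_tendsto_inner hweak
  have hlim : ∀ ψ, Tendsto (fun j => μ j * ⟪ψ, x j⟫_𝕜) atTop (𝓝 ⟪ψ, T y⟫_𝕜) := by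
    intro ψ
    simpa only [← adjoint_inner_right, (hTseq _).adjoint_eq, hT.adjoint_eq, heig,
      inner_smul_right] using tendsto_inner_of_tendsto_of_weak (hstrong ψ) hB hweak
  have hyy : ⟪y, y⟫_𝕜 ≠ 0 := inner_self_ne_zero.mpr hy
  have hc : Tendsto μ atTop (𝓝 (⟪y, T y⟫_𝕜 / ⟪y, y⟫_𝕜)) := by
    refine ((hlim y).div (hweak y) hyy).congr' ?_
    filter_upwards [(hweak y).eventually_ne hyy] with j hj
    exact mul_div_cancel_right₀ _ hj
  refine ⟨_, hc, ext_inner_left 𝕜 fun ψ => ?_⟩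
  rw [inner_smul_right]
  exact tendsto_nhds_unique (hlim ψ) (hc.mul (hweak ψ))

theorem mem_spectrum_of_apply_eq_smul {T : E →L[𝕜] E} {x : E} {μ : 𝕜} (hx : x ≠ 0)
    (h : T x = μ • x) : μ ∈ spectrum 𝕜 T := by
  rw [spectrum.mem_iff]
  intro hu
  have hinj := ((Module.End.isUnit_iff _).mp (hu.map toLinearMapRingHom)).injective
  exact hx (hinj (by simp [h]))

end Hilbert

theorem algebraMap_sInf_spectrum_le {A : Type*} [CStarAlgebra A] [PartialOrder A]
    [StarOrderedRing A] {a : A} (ha : IsSelfAdjoint a) :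
    algebraMap ℝ A (sInf (spectrum ℝ a)) ≤ a :=
  (algebraMap_le_iff_le_spectrum ha).mpr fun _ hx => csInf_le (spectrum.isCompact a).bddBelow hx

theorem csInf_spectrum_eq_of_algebraMap_le {A : Type*} [CStarAlgebra A] [PartialOrder A]
    [StarOrderedRing A] {a : A} (ha : IsSelfAdjoint a) {r : ℝ} (hr : r ∈ spectrum ℝ a)
    (hle : algebraMap ℝ A r ≤ a) : sInf (spectrum ℝ a) = r :=
  IsLeast.csInf_eq ⟨hr, (algebraMap_le_iff_le_spectrum ha).mp hle⟩

section ComplexHilbert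

variable {H : Type*} [NormedAddCommGroup H] [InnerProductSpace ℂ H]

theorem algebraMap_le_iff_forall_le_re_inner [CompleteSpace H] {A : H →L[ℂ] H}
    (hA : IsSelfAdjoint A) {r : ℝ} :
    algebraMap ℝ (H →L[ℂ] H) r ≤ A ↔ ∀ x, r * ‖x‖ ^ 2 ≤ RCLike.re ⟪A x, x⟫_ℂ := by
  have hsub : IsSelfAdjoint (A - algebraMap ℝ (H →L[ℂ] H) r) :=
    hA.sub (.algebraMap _ (star_trivial r))
  rw [ContinuousLinearMap.le_def, isPositive_def']
  simp only [hsub, true_and, reApplyInnerSelf_apply, sub_apply,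
    ContinuousLinearMap.algebraMap_apply, inner_sub_left, map_sub, sub_nonneg,
    RCLike.real_smul_eq_coe_smul (K := ℂ), inner_smul_left, inner_self_eq_norm_sq_to_K,
    RCLike.conj_ofReal, RCLike.re_ofReal_mul, ← RCLike.ofReal_pow, RCLike.ofReal_re]

theorem algebraMap_le_of_tendsto [CompleteSpace H] {ι : Type*} {l : Filter ι} [l.NeBot]
    {A : H →L[ℂ] H} {Aseq : ι → H →L[ℂ] H} (hA : IsSelfAdjoint A)
    (hAseq : ∀ i, IsSelfAdjoint (Aseq i))
    (hstrong : ∀ x, Tendsto (fun i => Aseq i x) l (𝓝 (A x))) {r : ℝ} {rseq : ι → ℝ}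
    (hr : Tendsto rseq l (𝓝 r)) (hle : ∀ i, algebraMap ℝ (H →L[ℂ] H) (rseq i) ≤ Aseq i) :
    algebraMap ℝ (H →L[ℂ] H) r ≤ A := by
  refine (algebraMap_le_iff_forall_le_re_inner hA).mpr fun x => ?_
  refine le_of_tendsto_of_tendsto' (hr.mul_const _)
    (RCLike.continuous_re.continuousAt.tendsto.comp ((hstrong x).inner tendsto_const_nhds))
    fun i => (algebraMap_le_iff_forall_le_re_inner (hAseq i)).mp (hle i) x

theorem ofReal_mem_spectrum_of_apply_eq_smul {T : H →L[ℂ] H} {x : H} {r : ℝ} (hx : x ≠ 0)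
    (h : T x = (r : ℂ) • x) : r ∈ spectrum ℝ T :=
  (spectrum.algebraMap_mem_iff ℂ).mp (mem_spectrum_of_apply_eq_smul hx h)

end ComplexHilbert

theorem stmt0_general {H : Type*} [NormedAddCommGroup H] [InnerProductSpace ℂ H] [CompleteSpace H]
    (T : H →L[ℂ] H) (Tseq : ℕ → H →L[ℂ] H)
    (hT : IsSelfAdjoint T) (hTseq : ∀ j, IsSelfAdjoint (Tseq j))
    (hstrong : ∀ x : H, Tendsto (fun j => Tseq j x) atTop (nhds (T x)))
    (E : ℕ → ℝ) (φseq : ℕ → H)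
    (heig : ∀ j, Tseq j (φseq j) = (E j : ℂ) • φseq j)
    (φ : H) (hφ : φ ≠ 0)
    (hweak : ∀ ψ : H,
      Tendsto (fun j => (inner ℂ ψ (φseq j) : ℂ)) atTop (nhds (inner ℂ ψ φ))) :
    ∃ Elim : ℝ, Tendsto E atTop (nhds Elim) ∧ T φ = (Elim : ℂ) • φ ∧
      ((∀ j, E j = sInf (spectrum ℝ (Tseq j))) → Elim = sInf (spectrum ℝ T)) := by
  obtain ⟨c, hc, hTφ⟩ := exists_tendsto_eigenvalue_of_weak hT hTseq hstrong heig hφ hweak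
  obtain ⟨Elim, hElim, rfl⟩ := Complex.exists_eq_ofReal_of_tendsto hc
  refine ⟨Elim, hElim, hTφ, fun hbottom => ?_⟩
  have hle : algebraMap ℝ (H →L[ℂ] H) Elim ≤ T :=
    algebraMap_le_of_tendsto hT hTseq hstrong hElim fun j =>
      hbottom j ▸ algebraMap_sInf_spectrum_le (hTseq j)
  exact (csInf_spectrum_eq_of_algebraMap_le hT
    (ofReal_mem_spectrum_of_apply_eq_smul hφ hTφ) hle).symm

/-- **Abstract existence of limiting eigenvalues** (bounded-operator case of
Lemma 5.1 of the paper). If a uniformly norm-bounded sequence of bounded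
self-adjoint operators `Tseq j` on a complex Hilbert space converges strongly
to `T`, each `Tseq j` has an eigenvalue `E j` with eigenvector `φseq j ≠ 0`,
and `φseq j` converges weakly to some `φ ≠ 0`, then `E := lim E j` exists and
is an eigenvalue of `T` with `T φ = E φ`; moreover if each `E j` is the bottom
of the spectrum of `Tseq j`, then `E` is the bottom of the spectrum of `T`. -/
theorem stmt0 {H : Type*} [NormedAddCommGroup H] [InnerProductSpace ℂ H] [CompleteSpace H]
    (T : H →L[ℂ] H) (Tseq : ℕ → H →L[ℂ] H)
    (hT : IsSelfAdjoint T) (hTseq : ∀ j, IsSelfAdjoint (Tseq j))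
    (hbdd : ∃ C : ℝ, ∀ j, ‖Tseq j‖ ≤ C)
    (hstrong : ∀ x : H, Tendsto (fun j => Tseq j x) atTop (nhds (T x)))
    (E : ℕ → ℝ) (φseq : ℕ → H) (hφseq : ∀ j, φseq j ≠ 0)
    (heig : ∀ j, Tseq j (φseq j) = (E j : ℂ) • φseq j)
    (φ : H) (hφ : φ ≠ 0)
    (hweak : ∀ ψ : H,
      Tendsto (fun j => (inner ℂ ψ (φseq j) : ℂ)) atTop (nhds (inner ℂ ψ φ))) :
    ∃ Elim : ℝ, Tendsto E atTop (nhds Elim) ∧ T φ = (Elim : ℂ) • φ ∧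
      ((∀ j, E j = sInf (spectrum ℝ (Tseq j))) → Elim = sInf (spectrum ℝ T)) :=
  stmt0_general T Tseq hT hTseq hstrong E φseq heig φ hφ hweak
end

section
/- Let κ ∈ (0,1) and set b(κ) := κ^{−1/2}(1−κ)^{1/2} and c(κ) := κ^{κ/2}(1−κ)^{(1−κ)/2}. Then for all real numbers λ, y with |λ| ≥ 1 one has |λ|^κ (λ² + y²)^{−1/2} ≤ ζ_κ(y), where ζ_κ(y) := (1+y²)^{−1/2} if |y| < b(κ) and ζ_κ(y) := c(κ)|y|^{κ−1} if |y| ≥ b(κ). -/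
/-!
Squaring both sides and writing `u = λ²`, `v = y²`, the claim becomes
`u^κ / (u + v) ≤ 1 / (1 + v)` when `|y| < b(κ)` and `u^κ / (u + v) ≤ κ^κ (1-κ)^(1-κ) v^(κ-1)`
otherwise. The threshold `b(κ)` is exactly where `κ (1 + v) ≤ 1`, and then the first bound follows
from Bernoulli's inequality `u^κ ≤ 1 + κ (u - 1)` for `u ≥ 1`. The second is the weighted AM-GM
inequality for `u / κ` and `v / (1 - κ)` with weights `κ` and `1 - κ`.
-/

namespace Real

lemma sq_rpow_div_two {x : ℝ} (hx : 0 ≤ x) (p : ℝ) : (x ^ (p / 2)) ^ 2 = x ^ p := by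
  rw [← rpow_mul_natCast hx]
  norm_num

lemma sq_abs_rpow (x p : ℝ) : (|x| ^ p) ^ 2 = (x ^ 2) ^ p := by
  rw [← rpow_mul_natCast (abs_nonneg x), ← sq_abs x, ← rpow_natCast, ← rpow_mul (abs_nonneg x),
    mul_comm]

lemma rpow_mul_rpow_one_sub_le {a b κ : ℝ} (ha : 0 ≤ a) (hb : 0 ≤ b) (hκ0 : 0 < κ) (hκ1 : κ < 1) :
    a ^ κ * b ^ (1 - κ) ≤ κ ^ κ * (1 - κ) ^ (1 - κ) * (a + b) := by
  have h1κ : 0 < 1 - κ := sub_pos.2 hκ1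
  have amgm := geom_mean_le_arith_mean2_weighted hκ0.le h1κ.le (div_nonneg ha hκ0.le)
    (div_nonneg hb h1κ.le) (add_sub_cancel κ 1)
  rw [mul_div_cancel₀ _ hκ0.ne', mul_div_cancel₀ _ h1κ.ne', div_rpow ha hκ0.le,
    div_rpow hb h1κ.le, div_mul_div_comm, div_le_iff₀ (by positivity)] at amgm
  linarith

lemma rpow_div_add_le {a b κ : ℝ} (ha : 0 ≤ a) (hb : 0 < b) (hκ0 : 0 < κ) (hκ1 : κ < 1) :
    a ^ κ / (a + b) ≤ κ ^ κ * (1 - κ) ^ (1 - κ) * b ^ (κ - 1) := by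
  have hb' : b ^ (1 - κ) * b ^ (κ - 1) = 1 := by
    rw [← rpow_add hb]; simp
  rw [div_le_iff₀ (by positivity)]
  calc a ^ κ = a ^ κ * b ^ (1 - κ) * b ^ (κ - 1) := by rw [mul_assoc, hb', mul_one]
    _ ≤ κ ^ κ * (1 - κ) ^ (1 - κ) * (a + b) * b ^ (κ - 1) := by
      gcongr ?_ * _
      exact rpow_mul_rpow_one_sub_le ha hb.le hκ0 hκ1
    _ = _ := by ring

lemma rpow_mul_one_add_le_add {a b κ : ℝ} (ha : 1 ≤ a) (hb : 0 ≤ b) (hκ0 : 0 ≤ κ)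
    (hκb : κ * (1 + b) ≤ 1) : a ^ κ * (1 + b) ≤ a + b := by
  have hκ1 : κ ≤ 1 := by nlinarith
  have bernoulli := rpow_one_add_le_one_add_mul_self (s := a - 1) (by linarith) hκ0 hκ1
  rw [add_sub_cancel] at bernoulli
  calc a ^ κ * (1 + b) ≤ (1 + κ * (a - 1)) * (1 + b) := by gcongr
    _ ≤ a + b := by nlinarith

lemma mul_one_add_sq_lt_one_of_abs_lt {κ y : ℝ} (hκ0 : 0 < κ) (hκ1 : κ < 1)
    (hy : |y| < κ ^ (-(1 : ℝ) / 2) * (1 - κ) ^ ((1 : ℝ) / 2)) : κ * (1 + y ^ 2) < 1 := by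
  have hy2 : y ^ 2 < κ⁻¹ * (1 - κ) := by
    rw [← sq_abs, ← rpow_neg_one, ← rpow_one (1 - κ), ← sq_rpow_div_two hκ0.le,
      ← sq_rpow_div_two (sub_pos.2 hκ1).le, ← mul_pow]
    exact pow_lt_pow_left₀ hy (abs_nonneg y) two_ne_zero
  rw [lt_inv_mul_iff₀ hκ0] at hy2
  linarith

end Real

open Real

/-- **Pointwise resolvent-weight inequality** (Eq. (3.14)/(ralf3) of the paper,
scalar form). For `κ ∈ (0,1)`, `b(κ) = κ^{-1/2}(1-κ)^{1/2}`,
`c(κ) = κ^{κ/2}(1-κ)^{(1-κ)/2}`, and all `λ, y ∈ ℝ` with `|λ| ≥ 1`,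
`|λ|^κ (λ² + y²)^{-1/2} ≤ ζ_κ(y)` where `ζ_κ(y) = (1+y²)^{-1/2}` if
`|y| < b(κ)` and `ζ_κ(y) = c(κ)|y|^{κ-1}` if `|y| ≥ b(κ)`. -/
theorem stmt1 (κ : ℝ) (hκ : κ ∈ Set.Ioo (0 : ℝ) 1) (lam y : ℝ) (hlam : 1 ≤ |lam|) :
    |lam| ^ κ * (lam ^ 2 + y ^ 2) ^ (-(1 : ℝ) / 2) ≤
      if |y| < κ ^ (-(1 : ℝ) / 2) * (1 - κ) ^ ((1 : ℝ) / 2) then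
        (1 + y ^ 2) ^ (-(1 : ℝ) / 2)
      else
        κ ^ (κ / 2) * (1 - κ) ^ ((1 - κ) / 2) * |y| ^ (κ - 1) := by
  obtain ⟨hκ0, hκ1⟩ := hκ
  have hlam2 : 1 ≤ lam ^ 2 := by rw [← sq_abs]; exact one_le_pow₀ hlam
  have hsum : 0 < lam ^ 2 + y ^ 2 := by positivity
  rw [← pow_le_pow_iff_left₀ (by positivity) (by split_ifs <;> positivity) two_ne_zero,
    mul_pow, sq_abs_rpow, sq_rpow_div_two hsum.le, rpow_neg_one, ← div_eq_mul_inv]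
  split_ifs with hy
  · rw [sq_rpow_div_two (by positivity), rpow_neg_one, div_le_iff₀ hsum, ← div_eq_inv_mul,
      le_div_iff₀ (by positivity)]
    exact rpow_mul_one_add_le_add hlam2 (sq_nonneg y) hκ0.le
      (mul_one_add_sq_lt_one_of_abs_lt hκ0 hκ1 hy).le
  · have hy0 : 0 < |y| := lt_of_lt_of_le (by positivity) (not_lt.1 hy)
    rw [mul_pow, mul_pow, sq_rpow_div_two hκ0.le, sq_rpow_div_two (sub_pos.2 hκ1).le, sq_abs_rpow]
    exact rpow_div_add_le (sq_nonneg lam) (by rw [← sq_abs]; positivity) hκ0 hκ1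
end

section
/- For all k, h ∈ ℝ³ with k ≠ 0, k−h ≠ 0, k_⊥ ≠ 0 and (k−h)_⊥ ≠ 0 one has ‖ε(k−h,1) − ε(k,1)‖ ≤ 4‖h‖/‖k_⊥‖. -/
/-!
Write `n x := x / ‖x‖`, so that `ε(k,1) = n k × n k_⊥`. By Lagrange's identity
`‖a × b‖ ≤ ‖a‖ ‖b‖`, so on unit-ball vectors the cross product is 1-Lipschitz in each slot and
`‖ε(k−h,1) − ε(k,1)‖ ≤ ‖n (k−h)_⊥ − n k_⊥‖ + ‖n (k−h) − n k‖`. Normalisation satisfies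
`‖n x − n y‖ ≤ 2 ‖x − y‖ / ‖y‖`; as `⊥` is linear with `‖h_⊥‖ ≤ ‖h‖` and `‖k_⊥‖ ≤ ‖k‖`, each
term is at most `2 ‖h‖ / ‖k_⊥‖`.
-/

noncomputable section

/-- `k_⊥ := (k₂, −k₁, 0)` for `k ∈ ℝ³`. -/
def perp (k : EuclideanSpace ℝ (Fin 3)) : EuclideanSpace ℝ (Fin 3) :=
  (WithLp.equiv 2 (Fin 3 → ℝ)).symm ![k 1, -(k 0), 0]

/-- The vector cross product on `ℝ³` (as Euclidean space). -/
def cross3 (a b : EuclideanSpace ℝ (Fin 3)) : EuclideanSpace ℝ (Fin 3) :=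
  (WithLp.equiv 2 (Fin 3 → ℝ)).symm
    ![a 1 * b 2 - a 2 * b 1, a 2 * b 0 - a 0 * b 2, a 0 * b 1 - a 1 * b 0]

/-- First Coulomb-gauge polarization vector `ε(k,0) := k_⊥ / ‖k_⊥‖`. -/
def eps0 (k : EuclideanSpace ℝ (Fin 3)) : EuclideanSpace ℝ (Fin 3) :=
  ‖perp k‖⁻¹ • perp k

/-- Second Coulomb-gauge polarization vector `ε(k,1) := (k/‖k‖) × ε(k,0)`. -/
def eps1 (k : EuclideanSpace ℝ (Fin 3)) : EuclideanSpace ℝ (Fin 3) :=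
  cross3 (‖k‖⁻¹ • k) (eps0 k)

namespace NormedSpace

variable {V : Type*} [NormedAddCommGroup V] [NormedSpace ℝ V]

theorem norm_normalize_le_one (x : V) : ‖normalize x‖ ≤ 1 := by
  by_cases hx : x = 0
  · simp only [hx, normalize_zero_eq_zero, norm_zero, zero_le_one]
  · exact (norm_normalize hx).le

theorem norm_normalize_sub_normalize_le (x : V) {y : V} (hy : y ≠ 0) :
    ‖normalize x - normalize y‖ ≤ 2 * ‖x - y‖ / ‖y‖ := by
  have hy' : 0 < ‖y‖ := norm_pos_iff.mpr hy
  have split : normalize x - normalize y =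
      ‖y‖⁻¹ • (x - y) + (‖y‖⁻¹ * (‖y‖ - ‖x‖)) • normalize x := by
    rw [mul_sub, inv_mul_cancel₀ hy'.ne', sub_smul, one_smul, mul_smul, norm_smul_normalize,
      smul_sub]
    unfold normalize
    abel
  have hnorms : |‖y‖ - ‖x‖| ≤ ‖x - y‖ := by
    rw [norm_sub_rev]; exact abs_norm_sub_norm_le y x
  calc ‖normalize x - normalize y‖
      ≤ ‖y‖⁻¹ * ‖x - y‖ + ‖y‖⁻¹ * |‖y‖ - ‖x‖| * ‖normalize x‖ := by
        rw [split]
        refine (norm_add_le _ _).trans_eq ?_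
        rw [norm_smul, norm_smul, norm_mul, norm_inv, norm_norm, Real.norm_eq_abs]
    _ ≤ ‖y‖⁻¹ * ‖x - y‖ + ‖y‖⁻¹ * ‖x - y‖ * 1 := by
        gcongr
        exact norm_normalize_le_one x
    _ = 2 * ‖x - y‖ / ‖y‖ := by ring

end NormedSpace

open NormedSpace

local notation "ℝ³" => EuclideanSpace ℝ (Fin 3)

theorem perp_sub (k h : ℝ³) : perp (k - h) = perp k - perp h := by
  ext i
  fin_cases i <;> simp [perp]; ring

theorem norm_perp_le (k : ℝ³) : ‖perp k‖ ≤ ‖k‖ := by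
  refine le_of_sq_le_sq ?_ (norm_nonneg k)
  simp only [EuclideanSpace.norm_sq_eq, perp, WithLp.equiv_symm_apply, Fin.sum_univ_three,
    Matrix.cons_val_zero, Matrix.cons_val_one, Matrix.cons_val, Real.norm_eq_abs, sq_abs, neg_sq]
  nlinarith [sq_nonneg (k 2)]

theorem cross3_sub_cross3 (a b c d : ℝ³) :
    cross3 a b - cross3 c d = cross3 a (b - d) + cross3 (a - c) d := by
  ext i
  fin_cases i <;> simp [cross3] <;> ring

theorem norm_cross3_sq_add_inner_sq (a b : ℝ³) :
    ‖cross3 a b‖ ^ 2 + inner ℝ a b ^ 2 = ‖a‖ ^ 2 * ‖b‖ ^ 2 := by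
  simp only [EuclideanSpace.norm_sq_eq, EuclideanSpace.inner_eq_star_dotProduct, cross3,
    WithLp.equiv_symm_apply, Real.norm_eq_abs, sq_abs, Fin.sum_univ_three,
    Matrix.cons_val_zero, Matrix.cons_val_one, Matrix.cons_val, dotProduct, Pi.star_apply, star_trivial]
  ring

theorem norm_cross3_le (a b : ℝ³) : ‖cross3 a b‖ ≤ ‖a‖ * ‖b‖ := by
  refine le_of_sq_le_sq ?_ (by positivity)
  nlinarith [norm_cross3_sq_add_inner_sq a b, sq_nonneg (inner ℝ a b)]

theorem norm_cross3_sub_cross3_le {a b c d : ℝ³} (ha : ‖a‖ ≤ 1) (hd : ‖d‖ ≤ 1) :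
    ‖cross3 a b - cross3 c d‖ ≤ ‖b - d‖ + ‖a - c‖ := by
  rw [cross3_sub_cross3]
  calc ‖cross3 a (b - d) + cross3 (a - c) d‖
      ≤ ‖a‖ * ‖b - d‖ + ‖a - c‖ * ‖d‖ :=
        (norm_add_le _ _).trans (add_le_add (norm_cross3_le _ _) (norm_cross3_le _ _))
    _ ≤ 1 * ‖b - d‖ + ‖a - c‖ * 1 := by gcongr
    _ = ‖b - d‖ + ‖a - c‖ := by ring

theorem eps1_eq_cross3_normalize (k : ℝ³) :
    eps1 k = cross3 (normalize k) (normalize (perp k)) := rfl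

theorem stmt4_general (k h : EuclideanSpace ℝ (Fin 3))
    (hkp : perp k ≠ 0) :
    ‖eps1 (k - h) - eps1 k‖ ≤ 4 * ‖h‖ / ‖perp k‖ := by
  have hk : k ≠ 0 := norm_pos_iff.mp ((norm_pos_iff.mpr hkp).trans_le (norm_perp_le k))
  have hdir : ‖normalize (k - h) - normalize k‖ ≤ 2 * ‖h‖ / ‖perp k‖ :=
    calc ‖normalize (k - h) - normalize k‖ ≤ 2 * ‖h‖ / ‖k‖ := by
          simpa using norm_normalize_sub_normalize_le (k - h) hk
      _ ≤ 2 * ‖h‖ / ‖perp k‖ := by gcongr; exact norm_perp_le k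
  have hpol : ‖normalize (perp (k - h)) - normalize (perp k)‖ ≤ 2 * ‖h‖ / ‖perp k‖ :=
    calc ‖normalize (perp (k - h)) - normalize (perp k)‖ ≤ 2 * ‖perp h‖ / ‖perp k‖ := by
          simpa [perp_sub] using norm_normalize_sub_normalize_le (perp (k - h)) hkp
      _ ≤ 2 * ‖h‖ / ‖perp k‖ := by gcongr; exact norm_perp_le h
  calc ‖eps1 (k - h) - eps1 k‖
      ≤ ‖normalize (perp (k - h)) - normalize (perp k)‖ + ‖normalize (k - h) - normalize k‖ := by
        simpa only [eps1_eq_cross3_normalize] using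
          norm_cross3_sub_cross3_le (norm_normalize_le_one _) (norm_normalize_le_one _)
    _ ≤ 4 * ‖h‖ / ‖perp k‖ := (add_le_add hpol hdir).trans_eq (by ring)

/-- **Lipschitz bound on the second polarization vector** (from the proof of
Proposition 5.5, the photon derivative bound):
`‖ε(k−h,1) − ε(k,1)‖ ≤ 4‖h‖/‖k_⊥‖` whenever `k ≠ 0`, `k−h ≠ 0`,
`k_⊥ ≠ 0` and `(k−h)_⊥ ≠ 0`. -/
theorem stmt4 (k h : EuclideanSpace ℝ (Fin 3))
    (hk : k ≠ 0) (hkh : k - h ≠ 0)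
    (hkp : perp k ≠ 0) (hkhp : perp (k - h) ≠ 0) :
    ‖eps1 (k - h) - eps1 k‖ ≤ 4 * ‖h‖ / ‖perp k‖ :=
  stmt4_general k h hkp
end
end
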